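/- arXiv:1610.00351 — 2 statements merged into one kernel-verified Lean document; each statement's English description precedes it below -/
import Mathlib

section
/- Eigenvector Cauchy–Schwarz estimate: Let μ be a probability measure supported in the closed unit ball of ℝⁿ with barycenter 0, and let T : ℝⁿ → ℝⁿ, Tv = ∫ ⟨x,v⟩ x dμ(x). Suppose Tν = λν with |ν| = 1 and λ ≥ 0. Then for every real inner product space W, every linear map L : ℝⁿ → W, and every z ∈ ℝⁿ: λ² |L(ν)|² ≤ λ ∫ |L(x − z)|² dμ(x). -/
open MeasureTheory Metric Set
open scoped RealInnerProductSpace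

noncomputable section

abbrev Eucl (n : ℕ) : Type := EuclideanSpace ℝ (Fin n)

end

set_option maxHeartbeats 1000000 in
/-- eigenvector Cauchy–Schwarz estimate. -/
theorem eigenvector_cauchy_schwarz (n : ℕ) (μ : Measure (Eucl n)) [IsProbabilityMeasure μ]
    (hsupp : μ (Metric.closedBall (0 : Eucl n) 1)ᶜ = 0)
    (hbar : (∫ x, x ∂μ) = (0 : Eucl n))
    (ν : Eucl n) (hν : ‖ν‖ = 1) (lam : ℝ) (hlam : 0 ≤ lam)
    (heig : (∫ x, ⟪x, ν⟫ • x ∂μ) = lam • ν)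
    (W : Type) [NormedAddCommGroup W] [InnerProductSpace ℝ W]
    (L : Eucl n →ₗ[ℝ] W) (z : Eucl n) :
    lam ^ 2 * ‖L ν‖ ^ 2 ≤ lam * ∫ x, ‖L (x - z)‖ ^ 2 ∂μ := by
  -- a.e. bound from support
  have hae : ∀ᵐ x ∂μ, ‖x‖ ≤ 1 := by
    rw [ae_iff]
    convert hsupp using 2
    ext x
    simp [mem_closedBall_zero_iff, not_le]
  set Lc : Eucl n →L[ℝ] W := LinearMap.toContinuousLinearMap L with hLc
  have hLL : ∀ x, L x = Lc x := fun x => rfl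
  set f : Eucl n → ℝ := fun x => ⟪x, ν⟫ with hf
  set g : Eucl n → W := fun x => Lc (x - z) with hg
  set c : ℝ := ‖L ν‖ with hc
  set h : Eucl n → ℝ := fun x => ⟪L ν, g x⟫ with hh
  have hgbound : ∀ x : Eucl n, ‖x‖ ≤ 1 → ‖g x‖ ≤ ‖Lc‖ * (1 + ‖z‖) := by
    intro x hx
    calc ‖Lc (x - z)‖ ≤ ‖Lc‖ * ‖x - z‖ := Lc.le_opNorm _
      _ ≤ ‖Lc‖ * (1 + ‖z‖) := by
          gcongr
          calc ‖x - z‖ ≤ ‖x‖ + ‖z‖ := norm_sub_le _ _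
            _ ≤ 1 + ‖z‖ := by gcongr
  have hfbound : ∀ x : Eucl n, ‖x‖ ≤ 1 → |f x| ≤ 1 := by
    intro x hx
    calc |f x| ≤ ‖x‖ * ‖ν‖ := abs_real_inner_le_norm _ _
      _ ≤ 1 := by rw [hν, mul_one]; exact hx
  have hhbound : ∀ x : Eucl n, |h x| ≤ c * ‖g x‖ := fun x => abs_real_inner_le_norm _ _
  -- continuity
  have hfc : Continuous f := continuous_id.inner continuous_const
  have hgc : Continuous g := Lc.continuous.comp (continuous_id.sub continuous_const)
  have hhc : Continuous h := continuous_const.inner hgc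
  -- integrability facts
  have hint_id : Integrable (fun x : Eucl n => x) μ :=
    Integrable.mono' (integrable_const 1) continuous_id.aestronglyMeasurable hae
  have hint_f : Integrable f μ := by
    refine Integrable.mono' (integrable_const 1) hfc.aestronglyMeasurable ?_
    filter_upwards [hae] with x hx using hfbound x hx
  have hint_fx : Integrable (fun x => f x • x) μ := by
    refine Integrable.mono' (integrable_const 1) (hfc.smul continuous_id).aestronglyMeasurable ?_
    filter_upwards [hae] with x hx
    rw [norm_smul]
    calc ‖f x‖ * ‖x‖ ≤ 1 * 1 :=
          mul_le_mul (hfbound x hx) hx (norm_nonneg _) zero_le_one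
      _ = 1 := one_mul 1
  have hint_fxz : Integrable (fun x => f x • (x - z)) μ := by
    refine Integrable.mono' (integrable_const (1 * (1 + ‖z‖)))
      (hfc.smul (continuous_id.sub continuous_const)).aestronglyMeasurable ?_
    filter_upwards [hae] with x hx
    rw [norm_smul]
    refine mul_le_mul (hfbound x hx) ?_ (norm_nonneg _) zero_le_one
    calc ‖x - z‖ ≤ ‖x‖ + ‖z‖ := norm_sub_le _ _
      _ ≤ 1 + ‖z‖ := by gcongr
  have hint_fh : Integrable (fun x => f x * h x) μ := by
    refine Integrable.mono' (integrable_const (1 * (c * (‖Lc‖ * (1 + ‖z‖)))))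
      (hfc.mul hhc).aestronglyMeasurable ?_
    filter_upwards [hae] with x hx
    rw [Real.norm_eq_abs, abs_mul]
    refine mul_le_mul (hfbound x hx) ?_ (abs_nonneg _) zero_le_one
    calc |h x| ≤ c * ‖g x‖ := hhbound x
      _ ≤ c * (‖Lc‖ * (1 + ‖z‖)) := by
          have := hgbound x hx
          have hc0 : 0 ≤ c := norm_nonneg _
          nlinarith
  have hint_fsq : Integrable (fun x => f x ^ 2) μ := by
    refine Integrable.mono' (integrable_const 1) (hfc.pow 2).aestronglyMeasurable ?_
    filter_upwards [hae] with x hx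
    rw [Real.norm_eq_abs, abs_pow]
    nlinarith [hfbound x hx, abs_nonneg (f x)]
  have hint_gsq : Integrable (fun x => ‖g x‖ ^ 2) μ := by
    refine Integrable.mono' (integrable_const ((‖Lc‖ * (1 + ‖z‖)) ^ 2))
      ((hgc.norm.pow 2)).aestronglyMeasurable ?_
    filter_upwards [hae] with x hx
    rw [Real.norm_eq_abs, abs_pow, abs_norm]
    exact pow_le_pow_left₀ (norm_nonneg _) (hgbound x hx) 2
  -- mean of f is zero
  have hfmean : (∫ x, f x ∂μ) = 0 := by
    have h1 : (∫ x, f x ∂μ) = ∫ x, ⟪ν, x⟫ ∂μ := by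
      simp only [hf, real_inner_comm]
    rw [h1, integral_inner hint_id, hbar, inner_zero_right]
  -- second moment along ν equals lam
  have hfsq : (∫ x, f x ^ 2 ∂μ) = lam := by
    have h1 : (∫ x, f x ^ 2 ∂μ) = ∫ x, ⟪ν, f x • x⟫ ∂μ := by
      refine integral_congr_ae (Filter.Eventually.of_forall fun x => ?_)
      show f x ^ 2 = ⟪ν, f x • x⟫
      rw [real_inner_smul_right, real_inner_comm]
      ring
    rw [h1, integral_inner hint_fx, heig, real_inner_smul_right,
      real_inner_self_eq_norm_sq, hν]
    ring
  -- ∫ f • (x - z) = lam • ν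
  have hmean1 : (∫ x, f x • (x - z) ∂μ) = lam • ν := by
    have hsplit : (fun x => f x • (x - z)) = fun x => f x • x - f x • z := by
      funext x; exact smul_sub _ _ _
    rw [hsplit, integral_sub hint_fx (hint_f.smul_const z), heig,
      integral_smul_const, hfmean, zero_smul, sub_zero]
  -- key identity: ∫ f h = lam * c ^ 2
  set φ : Eucl n →L[ℝ] ℝ := (innerSL ℝ (L ν)).comp Lc with hφ
  have hkey : (∫ x, f x * h x ∂μ) = lam * c ^ 2 := by
    have h1 : (fun x => f x * h x) = fun x => φ (f x • (x - z)) := by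
      funext x
      simp only [hφ, ContinuousLinearMap.comp_apply, _root_.map_smul, innerSL_apply_apply,
        real_inner_smul_right, smul_eq_mul, hh, hg]
    rw [h1, φ.integral_comp_comm hint_fxz, hmean1, _root_.map_smul]
    simp only [hφ, ContinuousLinearMap.comp_apply, innerSL_apply_apply, smul_eq_mul]
    rw [← hLL, real_inner_self_eq_norm_sq, hc]
  -- pointwise AM-GM bound
  have hpt : ∀ x, 2 * (f x * h x) ≤ f x ^ 2 * c ^ 2 + ‖g x‖ ^ 2 := by
    intro x
    have h1 : f x * h x ≤ |f x| * (c * ‖g x‖) := by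
      calc f x * h x ≤ |f x * h x| := le_abs_self _
        _ = |f x| * |h x| := abs_mul _ _
        _ ≤ |f x| * (c * ‖g x‖) := mul_le_mul_of_nonneg_left (hhbound x) (abs_nonneg _)
    nlinarith [sq_nonneg (|f x| * c - ‖g x‖), sq_abs (f x), abs_nonneg (f x),
      norm_nonneg (g x), norm_nonneg (L ν)]
  -- integrate the pointwise bound
  have hmain : 2 * (lam * c ^ 2) ≤ lam * c ^ 2 + ∫ x, ‖g x‖ ^ 2 ∂μ := by
    calc 2 * (lam * c ^ 2) = ∫ x, 2 * (f x * h x) ∂μ := by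
          rw [integral_const_mul, hkey]
      _ ≤ ∫ x, f x ^ 2 * c ^ 2 + ‖g x‖ ^ 2 ∂μ := by
          refine integral_mono (hint_fh.const_mul _) ?_ hpt
          exact (hint_fsq.mul_const _).add hint_gsq
      _ = lam * c ^ 2 + ∫ x, ‖g x‖ ^ 2 ∂μ := by
          rw [integral_add (hint_fsq.mul_const _) hint_gsq, integral_mul_const, hfsq]
  have hgoal : (∫ x, ‖L (x - z)‖ ^ 2 ∂μ) = ∫ x, ‖g x‖ ^ 2 ∂μ := by
    refine integral_congr_ae (Filter.Eventually.of_forall fun x => ?_)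
    simp only [hg, hLL]
  rw [hgoal]
  nlinarith [mul_le_mul_of_nonneg_left (by linarith [hmain] : lam * c ^ 2 ≤ ∫ x, ‖g x‖ ^ 2 ∂μ) hlam]
end

section
/- A measure that is a cone at two distinct vertices is translation invariant along the line through them: Let α > 0, let μ be a Borel measure on ℝⁿ, and let a, b ∈ ℝⁿ with a ≠ b. Suppose that for every λ > 0 and every Borel set A ⊆ ℝⁿ: μ(a + λ(A − a)) = λ^α μ(A) and μ(b + λ(A − b)) = λ^α μ(A). Then for every t ∈ ℝ and every Borel set A ⊆ ℝⁿ, μ(A + t(b − a)) = μ(A). -/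
open MeasureTheory

lemma dilation_image_measurable {n : ℕ} (c : EuclideanSpace ℝ (Fin n)) (l : ℝ)
    (hl : l ≠ 0) {A : Set (EuclideanSpace ℝ (Fin n))} (hA : MeasurableSet A) :
    MeasurableSet ((fun x => c + l • (x - c)) '' A) := by
  let h : EuclideanSpace ℝ (Fin n) ≃ₜ EuclideanSpace ℝ (Fin n) :=
    ((Homeomorph.subRight c).trans (Homeomorph.smulOfNeZero l hl)).trans
      (Homeomorph.addLeft c)
  have heq : (fun x : EuclideanSpace ℝ (Fin n) => c + l • (x - c)) = h := rfl
  rw [heq]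
  exact h.measurableEmbedding.measurableSet_image.2 hA

lemma translate_image_measurable {n : ℕ} (v : EuclideanSpace ℝ (Fin n))
    {A : Set (EuclideanSpace ℝ (Fin n))} (hA : MeasurableSet A) :
    MeasurableSet ((fun x => x + v) '' A) := by
  have heq : (fun x : EuclideanSpace ℝ (Fin n) => x + v) = Homeomorph.addRight v := rfl
  rw [heq]
  exact (Homeomorph.addRight v).measurableEmbedding.measurableSet_image.2 hA

/-- a measure that is a cone (dilation-homogeneous of degree `α`) at two
distinct vertices is invariant under translations along the line through them. -/
theorem cone_two_vertices_translation_invariant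
    (n : ℕ) (α : ℝ) (hα : 0 < α)
    (μ : Measure (EuclideanSpace ℝ (Fin n)))
    (a b : EuclideanSpace ℝ (Fin n)) (hab : a ≠ b)
    (ha : ∀ l : ℝ, 0 < l → ∀ A : Set (EuclideanSpace ℝ (Fin n)), MeasurableSet A →
      μ ((fun x => a + l • (x - a)) '' A) = ENNReal.ofReal (l ^ α) * μ A)
    (hb : ∀ l : ℝ, 0 < l → ∀ A : Set (EuclideanSpace ℝ (Fin n)), MeasurableSet A →
      μ ((fun x => b + l • (x - b)) '' A) = ENNReal.ofReal (l ^ α) * μ A) :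
    ∀ (t : ℝ) (A : Set (EuclideanSpace ℝ (Fin n))), MeasurableSet A →
      μ ((fun x => x + t • (b - a)) '' A) = μ A := by
  -- key step: translation invariance for parameters `s < 1`
  have key : ∀ s : ℝ, s < 1 → ∀ A : Set (EuclideanSpace ℝ (Fin n)), MeasurableSet A →
      μ ((fun x => x + s • (b - a)) '' A) = μ A := by
    intro s hs A hA
    have h1s : (0:ℝ) < 1 - s := by linarith
    set l : ℝ := (1 - s)⁻¹ with hl_def
    have hl : 0 < l := inv_pos.2 h1s
    have hmul : (1 - s) * l = 1 := mul_inv_cancel₀ (ne_of_gt h1s)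
    -- the composition of the two dilations is the translation
    have hcomp : (fun x : EuclideanSpace ℝ (Fin n) => b + (1 - s) • (x - b)) ∘
        (fun x => a + l • (x - a)) = fun x => x + s • (b - a) := by
      funext x
      simp only [Function.comp_apply]
      have : (1 - s) • ((a + l • (x - a)) - b) =
          ((1 - s) * l) • (x - a) + (1 - s) • (a - b) := by
        rw [mul_smul]
        module
      rw [this, hmul]
      module
    have hfA : MeasurableSet ((fun x => a + l • (x - a)) '' A) :=
      dilation_image_measurable a l (ne_of_gt hl) hA
    calc μ ((fun x => x + s • (b - a)) '' A)
        = μ ((fun x : EuclideanSpace ℝ (Fin n) => b + (1 - s) • (x - b)) ''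
            ((fun x => a + l • (x - a)) '' A)) := by
          rw [← Set.image_comp, hcomp]
      _ = ENNReal.ofReal ((1 - s) ^ α) * μ ((fun x => a + l • (x - a)) '' A) :=
          hb (1 - s) h1s _ hfA
      _ = ENNReal.ofReal ((1 - s) ^ α) * (ENNReal.ofReal (l ^ α) * μ A) := by
          rw [ha l hl A hA]
      _ = μ A := by
          rw [← mul_assoc, ← ENNReal.ofReal_mul (Real.rpow_nonneg (le_of_lt h1s) α),
            ← Real.mul_rpow (le_of_lt h1s) (le_of_lt hl), hmul, Real.one_rpow,
            ENNReal.ofReal_one, one_mul]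
  intro t A hA
  rcases lt_or_ge t 1 with ht | ht
  · exact key t ht A hA
  · -- use the inverse translation, which has parameter `-t < 1`
    have hB : MeasurableSet ((fun x => x + t • (b - a)) '' A) :=
      translate_image_measurable _ hA
    have h2 := key (-t) (by linarith) _ hB
    have hcomp : (fun x : EuclideanSpace ℝ (Fin n) => x + (-t) • (b - a)) ∘
        (fun x => x + t • (b - a)) = id := by
      funext x; simp only [Function.comp_apply, id_eq]; module
    rw [← Set.image_comp, hcomp, Set.image_id] at h2
    exact h2.symm
end
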